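/- Let N' be the symmetrized matrix of an OV quadratic form with v vinegar variables among n variables, n > 2v. If rank(N') = 2v, then ker(N') is contained in the oil subspace O' = {w : w_1 = ... = w_v = 0}, and dim ker(N') = n - 2v. -/
import Mathlib


open Matrix

/-- Let `N'` be a symmetric matrix over a field with vanishing oil-oil block
(`N' j k = 0` for `j, k ≥ v`), with `v < n - v`. If `rank N' = 2v`, then the
kernel of `N'` is contained in the oil subspace
`O' = {w | w_k = 0 for k < v}` and has dimension `n - 2v`. -/
theorem OV_symmetrized_kernel {K : Type*} [Field K] {n v : ℕ} (hv : v < n - v)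
    (N' : Matrix (Fin n) (Fin n) K)
    (hsymm : N'ᵀ = N')
    (hblock : ∀ j k : Fin n, v ≤ (j : ℕ) → v ≤ (k : ℕ) → N' j k = 0)
    (hrank : N'.rank = 2 * v) :
    (∀ w : Fin n → K, N' *ᵥ w = 0 → ∀ k : Fin n, (k : ℕ) < v → w k = 0) ∧
    Module.finrank K (LinearMap.ker N'.mulVecLin) = n - 2 * v := by
  classical
  have hvn : v ≤ n := by omega
  constructor
  · -- kernel is contained in the oil subspace
    intro w hw k0 hk0
    by_contra hwk0
    -- the linear functional x ↦ ∑ j, w j * x j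
    set φ : (Fin n → K) →ₗ[K] K := ∑ j : Fin n, w j • LinearMap.proj j with hφdef
    have hφ : ∀ x : Fin n → K, φ x = ∑ j : Fin n, w j * x j := by
      intro x
      simp [hφdef, LinearMap.sum_apply]
    -- the subspace V of vectors supported on the first v coordinates
    set V : Submodule K (Fin n → K) :=
      { carrier := {x | ∀ j : Fin n, v ≤ (j : ℕ) → x j = 0}
        add_mem' := by intro a b ha hb j hj; simp [ha j hj, hb j hj]
        zero_mem' := by intro j hj; rfl
        smul_mem' := by intro c a ha j hj; simp [ha j hj] } with hVdef
    have hVmem : ∀ x : Fin n → K, x ∈ V ↔ ∀ j : Fin n, v ≤ (j : ℕ) → x j = 0 :=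
      fun x => Iff.rfl
    -- V has dimension at most v
    have hVdim : Module.finrank K V ≤ v := by
      have hinj : Function.Injective
          ((LinearMap.funLeft K K (Fin.castLE hvn)).comp V.subtype) := by
        intro x y hxy
        ext j
        by_cases hj : (j : ℕ) < v
        · have := congrFun hxy ⟨(j : ℕ), hj⟩
          simpa [LinearMap.funLeft, Fin.castLE, Fin.ext_iff] using this
        · rw [x.2 j (le_of_not_gt hj), y.2 j (le_of_not_gt hj)]
      calc Module.finrank K V ≤ Module.finrank K (Fin v → K) :=
            LinearMap.finrank_le_finrank_of_injective hinj
        _ = v := by simp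
    -- U := V ∩ ker φ has dimension at most v - 1
    set U : Submodule K (Fin n → K) := V ⊓ LinearMap.ker φ with hUdef
    have heV : (Pi.single k0 1 : Fin n → K) ∈ V := by
      intro j hj
      have : j ≠ k0 := by
        intro h; subst h; omega
      simp [Pi.single_eq_of_ne this]
    have heU : (Pi.single k0 1 : Fin n → K) ∉ U := by
      intro h
      have hker := h.2
      simp only [SetLike.mem_coe, LinearMap.mem_ker] at hker; rw [hφ] at hker
      have : ∑ j : Fin n, w j * (Pi.single k0 1 : Fin n → K) j = w k0 := by
        rw [Finset.sum_eq_single k0]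
        · simp
        · intro b _ hb; simp [Pi.single_eq_of_ne hb]
        · simp
      rw [this] at hker
      exact hwk0 hker
    have hUlt : U < V := lt_of_le_of_ne inf_le_left (by
      intro h
      exact heU (h ▸ heV))
    have hUdim : Module.finrank K U < v :=
      lt_of_lt_of_le (Submodule.finrank_lt_finrank_of_lt hUlt) hVdim
    -- the span C of the first v columns
    set g : Fin v → (Fin n → K) := fun i => N'ᵀ (Fin.castLE hvn i) with hgdef
    set C : Submodule K (Fin n → K) := Submodule.span K (Set.range g) with hCdef
    have hCdim : Module.finrank K C ≤ v := by
      calc Module.finrank K C ≤ (Set.range g).toFinset.card :=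
            finrank_span_le_card _
        _ = Fintype.card (Set.range g) := Set.toFinset_card _
        _ ≤ Fintype.card (Fin v) := Fintype.card_range_le g
        _ = v := Fintype.card_fin v
    -- every column of N' lies in C ⊔ U
    have hcols : ∀ k : Fin n, N'ᵀ k ∈ C ⊔ U := by
      intro k
      by_cases hk : (k : ℕ) < v
      · apply Submodule.mem_sup_left
        apply Submodule.subset_span
        exact ⟨⟨(k : ℕ), hk⟩, by simp [hgdef, Fin.ext_iff]⟩
      · apply Submodule.mem_sup_right
        constructor
        · -- in V
          intro j hj
          have : N'ᵀ k j = N' j k := rfl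
          rw [this]
          exact hblock j k hj (le_of_not_gt hk)
        · -- in ker φ
          simp only [SetLike.mem_coe, LinearMap.mem_ker]; rw [hφ]
          have hs : ∀ a b : Fin n, N' a b = N' b a := by
            intro a b
            conv_lhs => rw [← hsymm]
            rfl
          have : ∀ j : Fin n, w j * N'ᵀ k j = N' k j * w j := by
            intro j
            rw [show N'ᵀ k j = N' j k from rfl, hs j k, mul_comm]
          rw [Finset.sum_congr rfl fun j _ => this j]
          have := congrFun hw k
          simpa [Matrix.mulVec, dotProduct] using this
    -- hence the range has dimension at most 2v - 1, contradiction
    have hrange : LinearMap.range N'.mulVecLin ≤ C ⊔ U := by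
      rw [Matrix.range_mulVecLin]
      rw [Submodule.span_le]
      rintro x ⟨k, rfl⟩
      exact hcols k
    have hrankle : N'.rank ≤ Module.finrank K (C ⊔ U : Submodule K (Fin n → K)) :=
      Submodule.finrank_mono hrange
    have hsup : Module.finrank K (C ⊔ U : Submodule K (Fin n → K)) ≤
        Module.finrank K C + Module.finrank K U :=
      Submodule.finrank_add_le_finrank_add_finrank C U
    have hk0v : 0 < v := by omega
    omega
  · -- dimension count via rank-nullity
    have h := LinearMap.finrank_range_add_finrank_ker N'.mulVecLin
    have hfr : Module.finrank K (Fin n → K) = n := by simp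
    rw [hfr] at h
    have : N'.rank = Module.finrank K (LinearMap.range N'.mulVecLin) := rfl
    omega
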